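/- arXiv:1806.09489 — 9 statements merged into one kernel-verified Lean document; each statement's English description precedes it below -/
import Mathlib

section
/- Let q be a prime power and let k be a field containing the finite field F_q. Then the vanishing ideal of the affine space A^n(F_q) equals Γ_q(k); that is, a polynomial f ∈ k[X_1, …, X_n] vanishes at every point of F_q^n if and only if f belongs to the ideal generated by X_1^q − X_1, …, X_n^q − X_n. -/
open MvPolynomial

/-!
Over the finite field `F_q` one has `∏_{a ∈ F_q} (X - a) = X^q - X`, so `Γ_q(k)` is generated by the
polynomials `∏_{a ∈ F_q} (X_i - a)`. For a grid `S_1 × ⋯ × S_n` of finite nonempty sets in an integral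
domain, the combinatorial Nullstellensatz writes every polynomial vanishing on the grid as a
combination of the `∏_{s ∈ S_i} (X_i - s)`; the converse holds because each of them vanishes there.
-/

namespace FiniteField

variable (K : Type*) [Field K] [Fintype K]

theorem prod_X_sub_C_eq_X_pow_card_sub_X :
    ∏ a : K, (Polynomial.X - Polynomial.C a) = Polynomial.X ^ Fintype.card K - Polynomial.X := by
  have hmonic : (Polynomial.X ^ Fintype.card K - Polynomial.X : Polynomial K).Monic :=
    Polynomial.monic_X_pow_sub (by simpa using Fintype.one_lt_card (α := K))
  have hroots := roots_X_pow_card_sub_X K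
  rw [← Polynomial.prod_multiset_X_sub_C_of_monic_of_roots_card_eq hmonic, hroots]
  · rfl
  · rw [hroots, X_pow_card_sub_X_natDegree_eq K Fintype.one_lt_card, Finset.card_val,
      Finset.card_univ]

theorem prod_sub_algebraMap_eq_pow_card_sub {A : Type*} [CommRing A] [Algebra K A] (x : A) :
    ∏ a : K, (x - algebraMap K A a) = x ^ Fintype.card K - x := by
  simpa using congrArg (Polynomial.aeval x) (prod_X_sub_C_eq_X_pow_card_sub_X K)

end FiniteField

namespace MvPolynomial

theorem forall_eval_eq_zero_iff_mem_span_prod_X_sub_C {R σ : Type*} [CommRing R] [IsDomain R]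
    [Finite σ] (S : σ → Finset R) (hS : ∀ i, (S i).Nonempty) (f : MvPolynomial σ R) :
    (∀ x : σ → R, (∀ i, x i ∈ S i) → eval x f = 0) ↔
      f ∈ Ideal.span (Set.range fun i => ∏ s ∈ S i, (X i - C s)) := by
  constructor
  · intro hf
    obtain ⟨h, -, rfl⟩ := combinatorial_nullstellensatz_exists_linearCombination S hS f hf
    exact Finsupp.mem_span_range_iff_exists_finsupp.mpr ⟨h, (Finsupp.linearCombination_apply _ _).symm⟩
  · intro hf x hx
    have hgen : Ideal.span (Set.range fun i => ∏ s ∈ S i, (X i - C s)) ≤ RingHom.ker (eval x) := by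
      rw [Ideal.span_le]
      rintro - ⟨i, rfl⟩
      simpa [eval_prod] using Finset.prod_eq_zero (hx i) (sub_self (x i))
    exact hgen hf

end MvPolynomial

/-- The vanishing ideal of `A^n(F_q)` equals `Γ_q(k)`: a polynomial
`f ∈ k[X_1,…,X_n]` vanishes at every point of `F_q^n` if and only if it lies in
the ideal generated by `X_1^q - X_1, …, X_n^q - X_n`. -/
theorem vanishingIdeal_affineSpace_eq_gamma
    (q n : ℕ) (hq : IsPrimePow q) (k : Type*) [Field k]
    (Fq : Subfield k) (hcard : Nat.card Fq = q)
    (f : MvPolynomial (Fin n) k) :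
    (∀ a : Fin n → Fq, MvPolynomial.eval (fun i => (a i : k)) f = 0) ↔
      f ∈ Ideal.span
        (Set.range fun i : Fin n => (X i : MvPolynomial (Fin n) k) ^ q - X i) := by
  classical
  have : Fintype Fq := @Fintype.ofFinite _ (Nat.finite_of_card_ne_zero (hcard ▸ hq.pos.ne'))
  let S : Finset k := Finset.univ.map (Function.Embedding.subtype (· ∈ Fq))
  have hgen (i : Fin n) : ∏ s ∈ S, (X i - C s) = (X i : MvPolynomial (Fin n) k) ^ q - X i := by
    rw [Finset.prod_map, ← hcard, Nat.card_eq_fintype_card]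
    exact FiniteField.prod_sub_algebraMap_eq_pow_card_sub Fq (X i)
  have hpoints : (∀ a : Fin n → Fq, eval (fun i => (a i : k)) f = 0) ↔
      ∀ x : Fin n → k, (∀ i, x i ∈ S) → eval x f = 0 := by
    simp only [S, Finset.mem_map, Finset.mem_univ, true_and, Function.Embedding.subtype_apply]
    exact ⟨fun hf x hx => by simpa using hf fun i => ⟨x i, by simpa using hx i⟩,
      fun hf a => hf _ fun i => ⟨a i, rfl⟩⟩
  rw [hpoints, forall_eval_eq_zero_iff_mem_span_prod_X_sub_C (fun _ => S) (fun _ => ⟨0, by simp [S]⟩)]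
  simp only [hgen]
end

section
/- Let q be a prime power and let k be a field containing the finite field F_q. Let I be an ideal of k[X_1, …, X_n] generated by finitely many polynomials with coefficients in F_q, and let Z(F_q) = {a ∈ F_q^n : f(a) = 0 for all f ∈ I} be its set of F_q-rational zeros. Then the vanishing ideal of Z(F_q) in k[X_1, …, X_n] equals I + Γ_q(k); that is, a polynomial f ∈ k[X_1, …, X_n] vanishes at every point of Z(F_q) if and only if f ∈ I + Γ_q(k). -/
/-!
A polynomial vanishes on the whole grid `F_q^n` iff it lies in `Γ_q(k)`: this is Alon's
combinatorial Nullstellensatz for the grid, since `∏_{a ∈ F_q} (X - a) = X^q - X`.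
For every `F_q`-point `a` outside `Z(F_q)` some `p ∈ I` has `p(a) ≠ 0`; rescaling these and
combining them as `1 - ∏ (1 - u_a)` gives `e ∈ I` with `e(a) = 1` at every such point. If `f`
vanishes on `Z(F_q)`, then `f (1 - e)` vanishes on `F_q^n`, so `f = f e + f (1 - e) ∈ I + Γ_q(k)`.
-/

open MvPolynomial

theorem FiniteField.prod_X_sub_C_eq_X_pow_card_sub_X_s4 (K : Type*) [Field K] [Fintype K] :
    ∏ a : K, (Polynomial.X - Polynomial.C a) = Polynomial.X ^ Fintype.card K - Polynomial.X := by
  have hmonic : (Polynomial.X ^ Fintype.card K - Polynomial.X : Polynomial K).Monic :=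
    Polynomial.monic_X_pow_sub (by simpa using Fintype.one_lt_card)
  have hroots := Polynomial.prod_multiset_X_sub_C_of_monic_of_roots_card_eq hmonic <| by
    rw [roots_X_pow_card_sub_X, X_pow_card_sub_X_natDegree_eq K Fintype.one_lt_card]
    simp
  rw [← hroots, roots_X_pow_card_sub_X]
  rfl

theorem Ideal.exists_mem_forall_algHom_eq_one {k R ι : Type*} [Field k] [CommRing R]
    [Algebra k R] (I : Ideal R) (φ : ι → R →ₐ[k] k) (s : Finset ι)
    (hs : ∀ i ∈ s, ∃ p ∈ I, φ i p ≠ 0) :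
    ∃ e ∈ I, ∀ i ∈ s, φ i e = 1 := by
  classical
  induction s using Finset.induction_on with
  | empty => exact ⟨0, I.zero_mem, by simp⟩
  | insert j s _ ih =>
    obtain ⟨e, heI, he⟩ := ih fun i hi => hs i (Finset.mem_insert_of_mem hi)
    obtain ⟨p, hpI, hp⟩ := hs j (Finset.mem_insert_self j s)
    set u := algebraMap k R (φ j p)⁻¹ * p
    have hu : φ j u = 1 := by simp [u, hp]
    -- `1 - (e + u - e * u) = (1 - e) * (1 - u)`
    refine ⟨e + u - e * u,
      I.sub_mem (I.add_mem heI (I.mul_mem_left _ hpI)) (I.mul_mem_right _ heI), ?_⟩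
    intro i hi
    rcases Finset.mem_insert.mp hi with rfl | hi
    · simp [hu]
    · simp [he i hi]

namespace MvPolynomial

noncomputable def gammaIdeal (σ k : Type*) [CommRing k] (q : ℕ) : Ideal (MvPolynomial σ k) :=
  Ideal.span (Set.range fun i : σ => (X i : MvPolynomial σ k) ^ q - X i)

variable {σ k : Type*} [Field k] {Fq : Subfield k} [Fintype Fq]

theorem prod_X_sub_C_subfield (i : σ) :
    ∏ a : Fq, (X i - C (a : k) : MvPolynomial σ k) = X i ^ Fintype.card Fq - X i := by
  simpa using congr_arg (Polynomial.eval₂RingHom (C.comp Fq.subtype) (X i : MvPolynomial σ k))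
    (FiniteField.prod_X_sub_C_eq_X_pow_card_sub_X_s4 Fq)

theorem gammaIdeal_le_ker_eval (a : σ → Fq) :
    gammaIdeal σ k (Fintype.card Fq) ≤ RingHom.ker (eval fun i => (a i : k)) := by
  rw [gammaIdeal, Ideal.span_le]
  rintro _ ⟨i, rfl⟩
  simp only [SetLike.mem_coe, RingHom.mem_ker]
  rw [← prod_X_sub_C_subfield, eval_prod]
  exact Finset.prod_eq_zero (Finset.mem_univ (a i)) (by simp)

theorem mem_gammaIdeal_of_eval_eq_zero [Finite σ] {f : MvPolynomial σ k}
    (hf : ∀ a : σ → Fq, eval (fun i => (a i : k)) f = 0) :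
    f ∈ gammaIdeal σ k (Fintype.card Fq) := by
  let S : σ → Finset k := fun _ => Finset.univ.map (Function.Embedding.subtype (· ∈ Fq))
  obtain ⟨h, -, rfl⟩ := combinatorial_nullstellensatz_exists_linearCombination S
    (fun _ => Finset.univ_nonempty.map) f fun x hx => by
      simpa using hf fun i => ⟨x i, by simpa [S] using hx i⟩
  have hS : (fun i => ∏ r ∈ S i, (X i - C r)) =
      fun i => (X i : MvPolynomial σ k) ^ Fintype.card Fq - X i := by
    funext i
    simp only [S, Finset.prod_map, Function.Embedding.subtype_apply]
    exact prod_X_sub_C_subfield i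
  rw [hS]
  exact (Finsupp.range_linearCombination _).le (LinearMap.mem_range_self _ h)

theorem mem_gammaIdeal_iff [Finite σ] {f : MvPolynomial σ k} :
    f ∈ gammaIdeal σ k (Fintype.card Fq) ↔ ∀ a : σ → Fq, eval (fun i => (a i : k)) f = 0 :=
  ⟨fun hf a => gammaIdeal_le_ker_eval a hf, mem_gammaIdeal_of_eval_eq_zero⟩

end MvPolynomial

theorem vanishingIdeal_eq_ideal_sup_gamma_general
    (q n : ℕ) (hq : IsPrimePow q) (k : Type*) [Field k]
    (Fq : Subfield k) (hcard : Nat.card Fq = q)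
    (I : Ideal (MvPolynomial (Fin n) k))
    (f : MvPolynomial (Fin n) k) :
    (∀ a : Fin n → Fq,
        (∀ p ∈ I, MvPolynomial.eval (fun i => (a i : k)) p = 0) →
        MvPolynomial.eval (fun i => (a i : k)) f = 0) ↔
      f ∈ I ⊔ Ideal.span
        (Set.range fun i : Fin n => (X i : MvPolynomial (Fin n) k) ^ q - X i) := by
  classical
  have : Finite Fq := Nat.finite_of_card_ne_zero (hcard ▸ hq.ne_zero)
  let : Fintype Fq := Fintype.ofFinite Fq
  rw [Nat.card_eq_fintype_card] at hcard
  subst hcard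
  change _ ↔ f ∈ I ⊔ gammaIdeal (Fin n) k _
  constructor
  · intro hf
    obtain ⟨e, heI, he⟩ := I.exists_mem_forall_algHom_eq_one
      (fun a : Fin n → Fq => aeval fun i => (a i : k))
      (Finset.univ.filter fun a => ¬ ∀ p ∈ I, eval (fun i => (a i : k)) p = 0) (by simp)
    have hfe : f * (1 - e) ∈ gammaIdeal (Fin n) k (Fintype.card Fq) := by
      refine mem_gammaIdeal_iff.mpr fun a => ?_
      by_cases ha : ∀ p ∈ I, eval (fun i => (a i : k)) p = 0
      · simp [hf a ha]
      · have hea : eval (fun i => (a i : k)) e = 1 := by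
          simpa [coe_aeval_eq_eval] using he a (by simpa using ha)
        simp [hea]
    rw [show f = f * e + f * (1 - e) by ring]
    exact Submodule.add_mem_sup (I.mul_mem_left f heI) hfe
  · intro hf a ha
    obtain ⟨p, hp, g, hg, rfl⟩ := Submodule.mem_sup.mp hf
    rw [map_add, ha p hp, mem_gammaIdeal_iff.mp hg a, add_zero]

/-- Affine `F_q`-Nullstellensatz: if `I` is an ideal of `k[X_1,…,X_n]` generated by
finitely many polynomials with coefficients in `F_q` and
`Z(F_q) = {a ∈ F_q^n : p(a) = 0 for all p ∈ I}`, then a polynomial `f ∈ k[X_1,…,X_n]`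
vanishes at every point of `Z(F_q)` if and only if `f ∈ I + Γ_q(k)`. -/
theorem vanishingIdeal_eq_ideal_sup_gamma
    (q n r : ℕ) (hq : IsPrimePow q) (k : Type*) [Field k]
    (Fq : Subfield k) (hcard : Nat.card Fq = q)
    (F : Fin r → MvPolynomial (Fin n) Fq)
    (I : Ideal (MvPolynomial (Fin n) k))
    (hI : I = Ideal.span (Set.range fun j => MvPolynomial.map Fq.subtype (F j)))
    (f : MvPolynomial (Fin n) k) :
    (∀ a : Fin n → Fq,
        (∀ p ∈ I, MvPolynomial.eval (fun i => (a i : k)) p = 0) →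
        MvPolynomial.eval (fun i => (a i : k)) f = 0) ↔
      f ∈ I ⊔ Ideal.span
        (Set.range fun i : Fin n => (X i : MvPolynomial (Fin n) k) ^ q - X i) :=
  vanishingIdeal_eq_ideal_sup_gamma_general q n hq k Fq hcard I f
end

section
/- Let q be a prime power and let f, f_1, …, f_m ∈ F_q[X_1, …, X_n]. If f vanishes at every common zero of f_1, …, f_m in F_q^n, then there exist g_1, …, g_m ∈ F_q[X_1, …, X_n] and γ ∈ Γ_q such that f = g_1 f_1 + ⋯ + g_m f_m + γ, where Γ_q is the ideal of F_q[X_1, …, X_n] generated by X_1^q − X_1, …, X_n^q − X_n. -/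
/-!
The polynomial `P = ∏ i, (1 - f_i ^ (q - 1))` evaluates to the indicator function of the common
zero set of the `f_i`, so `f * P` vanishes on all of `F_q^n`, while `1 - P` lies in the ideal
`(f_1, …, f_m)`. Hence `f = f * (1 - P) + f * P`, and it remains to see that a polynomial
vanishing on `F_q^n` lies in `Γ_q`: modulo `Γ_q` every exponent can be reduced below `q` (as
`X ^ q = X`), and a polynomial of degree `< q` in each variable vanishing on `F_q^n` is zero.
-/

open MvPolynomial

/-- If `x ^ q = x`, then `k ↦ x ^ k` is periodic of period `q - 1` on `k ≥ 1`. -/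
def reduceExponent (q k : ℕ) : ℕ :=
  if k = 0 then 0 else (k - 1) % (q - 1) + 1

@[simp]
theorem reduceExponent_zero (q : ℕ) : reduceExponent q 0 = 0 := rfl

theorem reduceExponent_le (q k : ℕ) (hq : 2 ≤ q) : reduceExponent q k ≤ q - 1 := by
  unfold reduceExponent
  split_ifs
  · omega
  · have := Nat.mod_lt (k - 1) (show 0 < q - 1 by omega)
    omega

theorem pow_reduceExponent {M : Type*} [Monoid M] {x : M} {q : ℕ} (hx : x ^ q = x) (k : ℕ) :
    x ^ reduceExponent q k = x ^ k := by
  have hstep : x ^ (q - 1) * x = x := by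
    rcases q with _ | q
    · simp
    · simpa [← pow_succ] using hx
  have hcycle : ∀ t, (x ^ (q - 1)) ^ t * x = x := by
    intro t
    induction t with
    | zero => simp
    | succ t ih => rw [pow_succ, mul_assoc, hstep, ih]
  unfold reduceExponent
  split_ifs with hk
  · simp [hk]
  · conv_rhs => rw [← Nat.sub_add_cancel (Nat.one_le_iff_ne_zero.2 hk),
      ← Nat.mod_add_div (k - 1) (q - 1)]
    rw [pow_succ, pow_succ, pow_add, pow_mul, mul_assoc, hcycle]

theorem Ideal.one_sub_prod_one_sub_mem {ι S : Type*} [CommRing S] {I : Ideal S} (s : Finset ι)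
    {a : ι → S} (ha : ∀ i ∈ s, a i ∈ I) : 1 - ∏ i ∈ s, (1 - a i) ∈ I := by
  have hmk : ∀ i ∈ s, Ideal.Quotient.mk I (1 - a i) = 1 := fun i hi => by
    rw [map_sub, map_one, Ideal.Quotient.eq_zero_iff_mem.2 (ha i hi), sub_zero]
  rw [← Ideal.Quotient.eq_zero_iff_mem, map_sub, map_one, map_prod, Finset.prod_eq_one hmk,
    sub_self]

namespace MvPolynomial

/-- The ideal `Γ_q`. -/
noncomputable def fieldEquationsIdeal (σ R : Type*) [CommRing R] (q : ℕ) :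
    Ideal (MvPolynomial σ R) :=
  Ideal.span (Set.range fun i => X i ^ q - X i)

variable {σ R : Type*}

section CommRing

variable [CommRing R] {q : ℕ}

theorem mk_X_pow_eq (i : σ) :
    Ideal.Quotient.mk (fieldEquationsIdeal σ R q) (X i) ^ q =
      Ideal.Quotient.mk (fieldEquationsIdeal σ R q) (X i) := by
  rw [← map_pow, Ideal.Quotient.eq]
  exact Ideal.subset_span ⟨i, rfl⟩

theorem monomial_sub_monomial_reduceExponent_mem (d : σ →₀ ℕ) (c : R) :
    monomial d c - monomial (d.mapRange (reduceExponent q) (reduceExponent_zero q)) c ∈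
      fieldEquationsIdeal σ R q := by
  rw [← Ideal.Quotient.eq, monomial_eq, monomial_eq, map_mul, map_mul, map_finsuppProd,
    map_finsuppProd]
  simp only [map_pow]
  rw [Finsupp.prod_mapRange_index fun _ => pow_zero _]
  exact congrArg _ (Finsupp.prod_congr fun i _ => (pow_reduceExponent (mk_X_pow_eq i) _).symm)

theorem exists_mem_restrictDegree_sub_mem_fieldEquationsIdeal (hq : 2 ≤ q)
    (p : MvPolynomial σ R) :
    ∃ r ∈ restrictDegree σ R (q - 1), p - r ∈ fieldEquationsIdeal σ R q := by
  induction p using MvPolynomial.induction_on' with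
  | monomial d c =>
    refine ⟨_, ?_, monomial_sub_monomial_reduceExponent_mem d c⟩
    classical
    rw [mem_restrictDegree]
    intro s hs i
    rw [Finset.mem_singleton.1 (support_monomial_subset hs)]
    exact reduceExponent_le q (d i) hq
  | add p₁ p₂ ih₁ ih₂ =>
    obtain ⟨r₁, hr₁, hp₁⟩ := ih₁
    obtain ⟨r₂, hr₂, hp₂⟩ := ih₂
    refine ⟨r₁ + r₂, add_mem hr₁ hr₂, ?_⟩
    rw [add_sub_add_comm]
    exact add_mem hp₁ hp₂

end CommRing

section FiniteField

variable {K : Type*} [Field K] [Fintype K]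

theorem eval_eq_zero_of_mem_fieldEquationsIdeal {p : MvPolynomial σ K}
    (hp : p ∈ fieldEquationsIdeal σ K (Fintype.card K)) (a : σ → K) : eval a p = 0 := by
  have : fieldEquationsIdeal σ K (Fintype.card K) ≤ RingHom.ker (eval a) := by
    refine Ideal.span_le.2 ?_
    rintro _ ⟨i, rfl⟩
    simp [FiniteField.pow_card]
  exact this hp

theorem eq_zero_of_mem_restrictDegree_of_forall_eval_eq_zero [Finite σ] {p : MvPolynomial σ K}
    (hp : p ∈ restrictDegree σ K (Fintype.card K - 1)) (h : ∀ a, eval a p = 0) : p = 0 := by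
  refine eq_zero_of_eval_zero_at_prod_finset p (fun _ => Finset.univ) (fun i => ?_) fun a _ => h a
  have hdeg : degreeOf i p ≤ Fintype.card K - 1 :=
    degreeOf_le_iff.2 fun m hm => (mem_restrictDegree _ p _).1 hp m hm i
  have := Fintype.card_pos (α := K)
  rw [Finset.card_univ]
  omega

theorem mem_fieldEquationsIdeal_card_iff [Finite σ] {p : MvPolynomial σ K} :
    p ∈ fieldEquationsIdeal σ K (Fintype.card K) ↔ ∀ a, eval a p = 0 := by
  refine ⟨eval_eq_zero_of_mem_fieldEquationsIdeal, fun h => ?_⟩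
  obtain ⟨r, hr, hpr⟩ :=
    exists_mem_restrictDegree_sub_mem_fieldEquationsIdeal (Fintype.one_lt_card (α := K)) p
  have hr0 : r = 0 := eq_zero_of_mem_restrictDegree_of_forall_eval_eq_zero hr fun a => by
    simpa [h a] using eval_eq_zero_of_mem_fieldEquationsIdeal hpr a
  rwa [hr0, sub_zero] at hpr

theorem eval_prod_one_sub_pow_card_sub_one_eq_zero {ι : Type*} {s : Finset ι}
    {F : ι → MvPolynomial σ K} {a : σ → K} {i : ι} (hi : i ∈ s)
    (ha : eval a (F i) ≠ 0) :
    eval a (∏ j ∈ s, (1 - F j ^ (Fintype.card K - 1))) = 0 := by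
  rw [map_prod]
  refine Finset.prod_eq_zero hi ?_
  rw [map_sub, map_one, map_pow, FiniteField.pow_card_sub_one_eq_one _ ha, sub_self]

end FiniteField

end MvPolynomial

theorem eq_combination_add_gamma_of_vanishing_on_common_zeros_general
    (q n m : ℕ)
    (Fq : Type*) [Field Fq] [Fintype Fq] (hcard : Fintype.card Fq = q)
    (f : MvPolynomial (Fin n) Fq) (F : Fin m → MvPolynomial (Fin n) Fq)
    (hvan : ∀ a : Fin n → Fq,
      (∀ i : Fin m, MvPolynomial.eval a (F i) = 0) → MvPolynomial.eval a f = 0) :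
    ∃ (g : Fin m → MvPolynomial (Fin n) Fq) (γ : MvPolynomial (Fin n) Fq),
      γ ∈ Ideal.span
        (Set.range fun i : Fin n => (X i : MvPolynomial (Fin n) Fq) ^ q - X i) ∧
      f = (∑ i : Fin m, g i * F i) + γ := by
  subst hcard
  set P := ∏ i, (1 - F i ^ (Fintype.card Fq - 1))
  have hfP : f * P ∈ fieldEquationsIdeal (Fin n) Fq (Fintype.card Fq) := by
    refine mem_fieldEquationsIdeal_card_iff.2 fun a => ?_
    by_cases hzero : ∀ i, eval a (F i) = 0
    · rw [map_mul, hvan a hzero, zero_mul]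
    · obtain ⟨i, hi⟩ := not_forall.1 hzero
      rw [map_mul, eval_prod_one_sub_pow_card_sub_one_eq_zero (Finset.mem_univ i) hi, mul_zero]
  have hf1P : f * (1 - P) ∈ Ideal.span (Set.range F) := by
    refine Ideal.mul_mem_left _ _ (Ideal.one_sub_prod_one_sub_mem _ fun i _ => ?_)
    have := Fintype.one_lt_card (α := Fq)
    exact Ideal.pow_mem_of_mem _ (Ideal.subset_span (Set.mem_range_self i)) _ (by omega)
  obtain ⟨g, hg⟩ := Ideal.mem_span_range_iff_exists_fun.1 hf1P
  exact ⟨g, f * P, hfP, by rw [hg]; ring⟩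

/-- If `f ∈ F_q[X_1,…,X_n]` vanishes at every common zero in `F_q^n` of
`f_1, …, f_m ∈ F_q[X_1,…,X_n]`, then `f = g_1 f_1 + ⋯ + g_m f_m + γ` for some
`g_1, …, g_m ∈ F_q[X_1,…,X_n]` and `γ ∈ Γ_q = ⟨X_1^q - X_1, …, X_n^q - X_n⟩`. -/
theorem eq_combination_add_gamma_of_vanishing_on_common_zeros
    (q n m : ℕ) (hq : IsPrimePow q)
    (Fq : Type*) [Field Fq] [Fintype Fq] (hcard : Fintype.card Fq = q)
    (f : MvPolynomial (Fin n) Fq) (F : Fin m → MvPolynomial (Fin n) Fq)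
    (hvan : ∀ a : Fin n → Fq,
      (∀ i : Fin m, MvPolynomial.eval a (F i) = 0) → MvPolynomial.eval a f = 0) :
    ∃ (g : Fin m → MvPolynomial (Fin n) Fq) (γ : MvPolynomial (Fin n) Fq),
      γ ∈ Ideal.span
        (Set.range fun i : Fin n => (X i : MvPolynomial (Fin n) Fq) ^ q - X i) ∧
      f = (∑ i : Fin m, g i * F i) + γ :=
  eq_combination_add_gamma_of_vanishing_on_common_zeros_general q n m Fq hcard f F hvan
end

section
/- Let q be a prime power and let k be a field containing the finite field F_q. For any ideal I of k[X_1, …, X_n] generated by finitely many polynomials with coefficients in F_q, the ideal I + Γ_q(k) is a radical ideal of k[X_1, …, X_n]. -/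
/-!
Let `J₀ ⊆ F_q[X]` be generated by the `F` and the `X_i ^ q - X_i`, so that `I + Γ_q(k)` is its
extension `J` to `k[X]`. Modulo `Γ_q(k)`, `f ^ q` is congruent to `f` with every coefficient raised
to the `q`-th power, so `f ^ q ∈ J` puts that polynomial in `J`. Now `J` is stable under every
`F_q`-linear map applied coefficientwise, and the Frobenius `c ↦ c ^ q` of `k` is `F_q`-linear and
injective, hence has an `F_q`-linear left inverse; applying it coefficientwise gives `f ∈ J`.
-/

open MvPolynomial

namespace MvPolynomial

section CoefficientwiseLinearMap

variable {σ K L M : Type*} [CommRing K] [CommRing L] [CommRing M] [Algebra K L] [Algebra K M]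

theorem addMonoidAlgebraMap_map_algebraMap_mul (l : L →ₗ[K] M) (g : MvPolynomial σ K)
    (f : MvPolynomial σ L) :
    AddMonoidAlgebra.map (l : L →+ M) (map (algebraMap K L) g * f) =
      map (algebraMap K M) g * AddMonoidAlgebra.map (l : L →+ M) f := by
  classical
  ext m
  simp only [coeff_addMonoidAlgebraMap, coeff_mul, coeff_map, map_sum, ← Algebra.smul_def]
  simp

theorem addMonoidAlgebraMap_mem_map {J : Ideal (MvPolynomial σ K)} (l : L →ₗ[K] M)
    {f : MvPolynomial σ L} (hf : f ∈ J.map (map (algebraMap K L))) :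
    AddMonoidAlgebra.map (l : L →+ M) f ∈ J.map (map (algebraMap K M)) := by
  suffices ∀ a, AddMonoidAlgebra.map (l : L →+ M) (a * f) ∈ J.map (map (algebraMap K M)) by
    simpa using this 1
  induction hf using Submodule.span_induction with
  | mem x hx =>
    obtain ⟨g, hg, rfl⟩ := hx
    intro a
    rw [mul_comm, addMonoidAlgebraMap_map_algebraMap_mul]
    exact Ideal.mul_mem_right _ _ (Ideal.mem_map_of_mem _ hg)
  | zero => simp
  | add x y _ _ hx hy =>
    intro a
    rw [mul_add, AddMonoidAlgebra.map_add]
    exact add_mem (hx a) (hy a)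
  | smul b x _ hx =>
    intro a
    rw [smul_eq_mul, ← mul_assoc]
    exact hx _

end CoefficientwiseLinearMap

section FiniteField

variable {σ K R : Type*} [Field K] [Fintype K] [CommRing R] [Algebra K R]

theorem pow_card_sub_map_frobeniusAlgHom_mem (f : MvPolynomial σ R) :
    f ^ Fintype.card K - map (FiniteField.frobeniusAlgHom K R : R →+* R) f ∈
      Ideal.span (Set.range fun i => X i ^ Fintype.card K - X i) := by
  set Γ := Ideal.span (Set.range fun i => (X i : MvPolynomial σ R) ^ Fintype.card K - X i)
  have hX (i : σ) : X i ^ Fintype.card K - X i ∈ Γ := Ideal.subset_span ⟨i, rfl⟩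
  rw [← Ideal.Quotient.eq]
  have : (Ideal.Quotient.mk Γ).comp (FiniteField.frobeniusAlgHom K (MvPolynomial σ R) : _ →+* _) =
      (Ideal.Quotient.mk Γ).comp (map (FiniteField.frobeniusAlgHom K R : R →+* R)) := by
    refine ringHom_ext (fun r => by simp) fun i => ?_
    simpa [← map_pow, Ideal.Quotient.eq] using hX i
  simpa using DFunLike.congr_fun this f

theorem isRadical_map_of_X_pow_card_sub_X_mem [IsReduced R] {J : Ideal (MvPolynomial σ K)}
    (hX : ∀ i, X i ^ Fintype.card K - X i ∈ J) :
    (J.map (map (algebraMap K R))).IsRadical := by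
  set φ := FiniteField.frobeniusAlgHom K R
  have hφ : LinearMap.ker φ.toLinearMap = ⊥ :=
    LinearMap.ker_eq_bot'.2 fun x hx => IsNilpotent.eq_zero ⟨_, hx⟩
  obtain ⟨ρ, hρ⟩ := φ.toLinearMap.exists_leftInverse_of_injective hφ
  have hΓ : Ideal.span (Set.range fun i => X i ^ Fintype.card K - X i) ≤
      J.map (map (algebraMap K R)) :=
    Ideal.span_le.2 <| Set.range_subset_iff.2 fun i => by
      simpa using Ideal.mem_map_of_mem (map (algebraMap K R)) (hX i)
  rw [Ideal.isRadical_iff_pow_one_lt _ (Fintype.one_lt_card (α := K))]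
  intro f hf
  have hφf : map (φ : R →+* R) f ∈ J.map (map (algebraMap K R)) := by
    simpa using sub_mem hf (hΓ (pow_card_sub_map_frobeniusAlgHom_mem f))
  have hρφf : AddMonoidAlgebra.map (ρ : R →+ R) (map (φ : R →+* R) f) = f := by
    ext m
    simpa [coeff_map] using LinearMap.congr_fun hρ (coeff m f)
  simpa [hρφf] using addMonoidAlgebraMap_mem_map ρ hφf

end FiniteField

end MvPolynomial

/-- For any ideal `I` of `k[X_1,…,X_n]` generated by finitely many polynomials with
coefficients in `F_q`, the ideal `I + Γ_q(k)` is a radical ideal. -/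
theorem ideal_sup_gamma_isRadical
    (q n r : ℕ) (hq : IsPrimePow q) (k : Type*) [Field k]
    (Fq : Subfield k) (hcard : Nat.card Fq = q)
    (F : Fin r → MvPolynomial (Fin n) Fq)
    (I : Ideal (MvPolynomial (Fin n) k))
    (hI : I = Ideal.span (Set.range fun j => MvPolynomial.map Fq.subtype (F j))) :
    (I ⊔ Ideal.span
      (Set.range fun i : Fin n => (X i : MvPolynomial (Fin n) k) ^ q - X i)).IsRadical := by
  have := Nat.finite_of_card_ne_zero (hcard ▸ hq.pos.ne')
  have := Fintype.ofFinite Fq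
  obtain rfl : Fintype.card Fq = q := Nat.card_eq_fintype_card (α := Fq) ▸ hcard
  have hJ : I ⊔ Ideal.span (Set.range fun i => X i ^ Fintype.card Fq - X i) =
      (Ideal.span (Set.range F ∪ Set.range fun i => X i ^ Fintype.card Fq - X i)).map
        (map (algebraMap Fq k)) := by
    rw [Ideal.map_span, Set.image_union, Ideal.span_union, hI, ← Set.range_comp,
      ← Set.range_comp]
    congr 3
    ext i
    simp
  rw [hJ]
  exact isRadical_map_of_X_pow_card_sub_X_mem fun i => Ideal.subset_span (Or.inr ⟨i, rfl⟩)
end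

section
/- Let q be a prime power and let k be a field containing the finite field F_q. Let I be an ideal of k[X_1, …, X_n] generated by finitely many polynomials with coefficients in F_q, and let Z(F_q) = {a ∈ F_q^n : f(a) = 0 for all f ∈ I}. Then the number of points of Z(F_q) is at most the dimension of k[X_1, …, X_n]/(I + Γ_q(k)) as a k-vector space: |Z(F_q)| ≤ dim_k k[X_1, …, X_n]/(I + Γ_q(k)). -/
/-!
Evaluation at an `F_q`-point `a` of `I` kills `I` and, since `a_i ^ q = a_i`, also `Γ_q(k)`; so it
factors through a `k`-algebra homomorphism `A := k[X_1, …, X_n] ⧸ (I + Γ_q(k)) → k`, and distinct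
points give distinct homomorphisms. The algebra `A` is finite-dimensional because it is generated
by the images of the `X_i`, which are integral (roots of `T ^ q - T`). By Dedekind's independence
of characters a finite-dimensional `k`-algebra has at most `dim_k A` algebra homomorphisms to `k`.
-/

open MvPolynomial

theorem MvPolynomial.finite_quotient_of_X_pow_sub_X_mem {σ R : Type*} [Finite σ] [CommRing R]
    {q : ℕ} (hq : 1 < q) (J : Ideal (MvPolynomial σ R))
    (hJ : ∀ i, (X i : MvPolynomial σ R) ^ q - X i ∈ J) :
    Module.Finite R (MvPolynomial σ R ⧸ J) := by
  have hX : ∀ i, IsIntegral R (Ideal.Quotient.mkₐ R J (X i)) := fun i =>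
    ⟨Polynomial.X ^ q - Polynomial.X,
      Polynomial.monic_X_pow_sub (Polynomial.degree_X_le.trans_lt (by exact_mod_cast hq)),
      by simpa [Polynomial.eval₂_sub, ← map_pow, ← map_sub] using
        Ideal.Quotient.eq_zero_iff_mem.2 (hJ i)⟩
  have hint : ⊤ ≤ (integralClosure R (MvPolynomial σ R ⧸ J)).comap (Ideal.Quotient.mkₐ R J) :=
    adjoin_range_X (R := R) ▸ Algebra.adjoin_le (Set.range_subset_iff.2 hX)
  have : Algebra.IsIntegral R (MvPolynomial σ R ⧸ J) :=
    ⟨fun a => by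
      obtain ⟨p, rfl⟩ := Ideal.Quotient.mkₐ_surjective R J a
      exact hint Algebra.mem_top⟩
  exact Algebra.IsIntegral.finite

section ZeroLocus

variable {σ K : Type*} [Field K] (J : Ideal (MvPolynomial σ K))

noncomputable def MvPolynomial.zeroLocusToAlgHom (x : zeroLocus K J) :
    MvPolynomial σ K ⧸ J →ₐ[K] K :=
  Ideal.Quotient.liftₐ J (aeval x.1) (mem_zeroLocus_iff.1 x.2)

theorem MvPolynomial.zeroLocusToAlgHom_injective : Function.Injective (zeroLocusToAlgHom J) := by
  intro x y h
  ext i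
  simpa [zeroLocusToAlgHom] using DFunLike.congr_fun h (Ideal.Quotient.mk J (X i))

variable [Module.Finite K (MvPolynomial σ K ⧸ J)]

instance MvPolynomial.finite_zeroLocus : Finite (zeroLocus K J) :=
  .of_injective _ (zeroLocusToAlgHom_injective J)

theorem MvPolynomial.card_zeroLocus_le_finrank_quotient :
    Nat.card (zeroLocus K J) ≤ Module.finrank K (MvPolynomial σ K ⧸ J) :=
  (Nat.card_le_card_of_injective _ (zeroLocusToAlgHom_injective J)).trans
    (card_algHom_le_finrank K _ K)

end ZeroLocus

theorem MvPolynomial.mem_zeroLocus_sup_span_X_pow_card_sub_X {σ K : Type*} [Field K]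
    (Fq : Subfield K) [Finite Fq] (I : Ideal (MvPolynomial σ K)) (a : σ → Fq)
    (ha : ∀ p ∈ I, eval (fun i => (a i : K)) p = 0) :
    (fun i => (a i : K)) ∈ zeroLocus K
      (I ⊔ Ideal.span (Set.range fun i => (X i : MvPolynomial σ K) ^ Nat.card Fq - X i)) := by
  have : Fintype Fq := Fintype.ofFinite Fq
  suffices I ⊔ Ideal.span _ ≤ RingHom.ker (aeval fun i => (a i : K)) from
    fun p hp => this hp
  refine sup_le (fun p hp => by simpa [coe_aeval_eq_eval] using ha p hp) ?_
  refine Ideal.span_le.2 (Set.range_subset_iff.2 fun i => ?_)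
  simp [Nat.card_eq_fintype_card, ← SubmonoidClass.coe_pow, FiniteField.pow_card]

theorem card_rationalPoints_le_finrank_quotient_general
    (q n : ℕ) (hq : IsPrimePow q) (k : Type*) [Field k]
    (Fq : Subfield k) (hcard : Nat.card Fq = q)
    (I : Ideal (MvPolynomial (Fin n) k)) :
    Nat.card {a : Fin n → Fq //
        ∀ p ∈ I, MvPolynomial.eval (fun i => (a i : k)) p = 0} ≤
      Module.finrank k
        (MvPolynomial (Fin n) k ⧸
          (I ⊔ Ideal.span
            (Set.range fun i : Fin n => (X i : MvPolynomial (Fin n) k) ^ q - X i))) := by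
  have : Finite Fq := Nat.finite_of_card_ne_zero (hcard ▸ hq.ne_zero)
  subst hcard
  set Γ := Ideal.span
    (Set.range fun i : Fin n => (X i : MvPolynomial (Fin n) k) ^ Nat.card Fq - X i)
  have : Module.Finite k (MvPolynomial (Fin n) k ⧸ (I ⊔ Γ)) :=
    finite_quotient_of_X_pow_sub_X_mem hq.one_lt _
      fun i => Ideal.mem_sup_right (Ideal.subset_span ⟨i, rfl⟩)
  let toZeroLocus (a : {a : Fin n → Fq // ∀ p ∈ I, eval (fun i => (a i : k)) p = 0}) :
      zeroLocus k (I ⊔ Γ) :=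
    ⟨_, mem_zeroLocus_sup_span_X_pow_card_sub_X Fq I a.1 a.2⟩
  have hinj : Function.Injective toZeroLocus := fun a b h => by
    ext i
    exact congrFun (congrArg Subtype.val h) i
  exact (Nat.card_le_card_of_injective _ hinj).trans (card_zeroLocus_le_finrank_quotient _)

/-- If `I` is an ideal of `k[X_1,…,X_n]` generated by finitely many polynomials with
coefficients in `F_q`, and `Z(F_q) = {a ∈ F_q^n : p(a) = 0 for all p ∈ I}`, then
`|Z(F_q)| ≤ dim_k k[X_1,…,X_n]/(I + Γ_q(k))`. -/
theorem card_rationalPoints_le_finrank_quotient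
    (q n r : ℕ) (hq : IsPrimePow q) (k : Type*) [Field k]
    (Fq : Subfield k) (hcard : Nat.card Fq = q)
    (F : Fin r → MvPolynomial (Fin n) Fq)
    (I : Ideal (MvPolynomial (Fin n) k))
    (hI : I = Ideal.span (Set.range fun j => MvPolynomial.map Fq.subtype (F j))) :
    Nat.card {a : Fin n → Fq //
        ∀ p ∈ I, MvPolynomial.eval (fun i => (a i : k)) p = 0} ≤
      Module.finrank k
        (MvPolynomial (Fin n) k ⧸
          (I ⊔ Ideal.span
            (Set.range fun i : Fin n => (X i : MvPolynomial (Fin n) k) ^ q - X i))) :=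
  card_rationalPoints_le_finrank_quotient_general q n hq k Fq hcard I
end

section
/- Let q be a prime power, let k be a field containing the finite field F_q, and fix a monomial order ≼ on the monomials of k[X_1, …, X_n]. Let f_1, …, f_r be nonzero polynomials in F_q[X_1, …, X_n] and let Z(F_q) = {a ∈ F_q^n : f_1(a) = ⋯ = f_r(a) = 0}. Then |Z(F_q)| ≤ |Δ̄(f_1, …, f_r)|, where Δ̄(f_1, …, f_r) is the set of monomials μ such that μ is reduced (each variable occurring in μ has exponent at most q−1) and μ is divisible by none of the leading monomials in_≼(f_1), …, in_≼(f_r). -/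
open MvPolynomial

/-!
Reduce every polynomial modulo `f_1, …, f_r` and the field equations `X_i ^ q - X_i` by the
multivariate division algorithm. The remainder has the same values on the common zero set `Z`
and is supported on the footprint, since the field equations have leading monomials `X_i ^ q`.
As every function `F_q^n → F_q` is polynomial, the footprint monomials therefore span the
`|Z|`-dimensional space of functions `Z → F_q`.
-/

section IsMonomialOrder

variable {σ : Type*}

structure IsMonomialOrder (le : (σ →₀ ℕ) → (σ →₀ ℕ) → Prop) : Prop where
  antisymm : ∀ a b, le a b → le b a → a = b
  trans : ∀ a b c, le a b → le b c → le a c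
  total : ∀ a b, le a b ∨ le b a
  zero_le : ∀ a, le 0 a
  add_le_add_left : ∀ c a b, le a b → le (c + a) (c + b)

namespace IsMonomialOrder

/-- A copy of `σ →₀ ℕ` without its pointwise order, to carry the order `le` instead. -/
def Syn (_le : (σ →₀ ℕ) → (σ →₀ ℕ) → Prop) : Type _ := σ →₀ ℕ

variable {le : (σ →₀ ℕ) → (σ →₀ ℕ) → Prop}

noncomputable instance : AddCommMonoid (Syn le) := inferInstanceAs (AddCommMonoid (σ →₀ ℕ))

noncomputable def toSyn : (σ →₀ ℕ) ≃+ Syn le := AddEquiv.refl _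

variable (h : IsMonomialOrder le)
include h

theorem rel_of_le {a b : σ →₀ ℕ} (hab : a ≤ b) : le a b := by
  obtain ⟨c, rfl⟩ := exists_add_of_le hab
  simpa using h.add_le_add_left a 0 c (h.zero_le c)

/-- Well-foundedness comes from Dickson's lemma, since `le` extends the pointwise order. -/
noncomputable def toMonomialOrder [Finite σ] : MonomialOrder σ :=
  letI : LinearOrder (Syn le) :=
    { le := le
      le_refl a := (h.total a a).elim id id
      le_trans := h.trans
      le_antisymm := h.antisymm
      le_total := h.total
      toDecidableLE := Classical.decRel _ }
  have mono : Monotone (toSyn (le := le)) := fun _ _ => h.rel_of_le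
  { syn := Syn le
    isOrderedAddMonoid_syn :=
      { add_le_add_left a b hab c := by
          rw [add_comm a c, add_comm b c]
          exact h.add_le_add_left c a b hab }
    toSyn := toSyn
    toSyn_monotone := mono
    wellFoundedLT_syn :=
      (mono.wellQuasiOrderedLE_of_wellQuasiOrderedLE_of_surjective
        toSyn.surjective).to_wellFoundedLT }

end IsMonomialOrder

end IsMonomialOrder

namespace MonomialOrder

variable {σ R : Type*} (m : MonomialOrder σ)

theorem degree_eq_of_forall_le [CommSemiring R] {f : MvPolynomial σ R} {d : σ →₀ ℕ}
    (hd : d ∈ f.support) (hle : ∀ c ∈ f.support, m.toSyn c ≤ m.toSyn d) : m.degree f = d :=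
  m.toSyn.injective <|
    le_antisymm (hle _ (m.degree_mem_support (support_nonempty.1 ⟨d, hd⟩))) (m.le_degree hd)

theorem degree_X_pow_sub_X [CommRing R] [Nontrivial R] (i : σ) {q : ℕ} (hq : 1 < q) :
    m.degree (X i ^ q - X i : MvPolynomial σ R) = Finsupp.single i q := by
  have hXq : m.degree (X i ^ q : MvPolynomial σ R) = Finsupp.single i q := by
    classical
    rw [X_pow_eq_monomial, degree_monomial, if_neg one_ne_zero]
  have hlt : m.toSyn (m.degree (X i : MvPolynomial σ R)) <
      m.toSyn (m.degree (X i ^ q : MvPolynomial σ R)) := by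
    rw [degree_X, hXq]
    exact m.toSyn_strictMono <| lt_of_le_of_ne (Finsupp.single_le_single.2 hq.le)
      (Finsupp.single_injective i |>.ne hq.ne)
  rw [degree_sub_of_lt hlt, hXq]

theorem exists_sub_mem_span_forall_not_degree_le [Field R] {B : Set (MvPolynomial σ R)}
    (hB : ∀ b ∈ B, b ≠ 0) (f : MvPolynomial σ R) :
    ∃ r, f - r ∈ Ideal.span B ∧ ∀ c ∈ r.support, ∀ b ∈ B, ¬ m.degree b ≤ c := by
  obtain ⟨g, r, rfl, -, hr⟩ :=
    m.div_set (fun b hb => (m.leadingCoeff_ne_zero_iff.2 (hB b hb)).isUnit) f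
  refine ⟨r, ?_, hr⟩
  rw [add_sub_cancel_right]
  exact (Finsupp.mem_span_iff_linearCombination _ B _).2 ⟨g, rfl⟩

end MonomialOrder

namespace MvPolynomial

variable {σ ι K : Type*}

def footprint (q : ℕ) (L : ι → σ →₀ ℕ) : Set (σ →₀ ℕ) :=
  {μ | (∀ i, μ i ≤ q - 1) ∧ ∀ j, ¬ L j ≤ μ}

theorem finite_footprint [Finite σ] (q : ℕ) (L : ι → σ →₀ ℕ) : (footprint q L).Finite := by
  classical
  exact (Set.finite_Iic (Finsupp.equivFunOnFinite.symm fun _ => q - 1)).subset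
    fun _ hμ i => hμ.1 i

variable [Field K] [Finite K]

theorem eval_X_pow_natCard_sub_X (a : σ → K) (i : σ) :
    eval a (X i ^ Nat.card K - X i) = 0 := by
  have := Fintype.ofFinite K
  simp [Nat.card_eq_fintype_card, FiniteField.pow_card]

variable [Finite σ]

theorem natCard_le_of_forall_exists_restrictSupport_eqOn (Z : Set (σ → K))
    (S : Set (σ →₀ ℕ)) [Finite S]
    (h : ∀ f : MvPolynomial σ K,
      ∃ g ∈ restrictSupport K S, Set.EqOn (eval · f) (eval · g) Z) :
    Nat.card Z ≤ Nat.card S := by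
  have := Fintype.ofFinite K
  let restrict : MvPolynomial σ K →ₗ[K] Z → K :=
    LinearMap.funLeft K K ((↑) : Z → σ → K) ∘ₗ evalₗ K σ
  have hsurj : (restrictSupport K S).map restrict = ⊤ := by
    refine eq_top_iff.2 fun φ _ => ?_
    obtain ⟨f, -, hf⟩ : Function.extend (↑) φ (0 : (σ → K) → K) ∈
        (restrictDegree σ K (Fintype.card K - 1)).map (evalₗ K σ) := by
      rw [map_restrict_dom_evalₗ]
      trivial
    obtain ⟨g, hgS, hfg⟩ := h f
    refine ⟨g, hgS, ?_⟩
    funext a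
    change eval a.1 g = φ a
    rw [← show eval a.1 f = eval a.1 g from hfg a.2, ← evalₗ_apply, hf,
      Subtype.val_injective.extend_apply]
  have := Module.Finite.of_basis (basisRestrictSupport K S)
  have := Fintype.ofFinite Z
  calc Nat.card Z = Module.finrank K (Z → K) := by
        rw [Module.finrank_fintype_fun_eq_card, Nat.card_eq_fintype_card]
    _ = Module.finrank K ((restrictSupport K S).map restrict) := by rw [hsurj, finrank_top]
    _ ≤ Module.finrank K (restrictSupport K S) := Submodule.finrank_map_le _ _
    _ = Nat.card S := Module.finrank_eq_nat_card_basis (basisRestrictSupport K S)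

theorem natCard_zeros_le_natCard_footprint (m : MonomialOrder σ)
    (F : ι → MvPolynomial σ K) (hF : ∀ j, F j ≠ 0) :
    Nat.card {a : σ → K // ∀ j, eval a (F j) = 0} ≤
      Nat.card (footprint (Nat.card K) fun j => m.degree (F j)) := by
  set q := Nat.card K
  have hq : 1 < q := Finite.one_lt_card
  let B := Set.range F ∪ Set.range fun i => (X i ^ q - X i : MvPolynomial σ K)
  have hB : ∀ b ∈ B, b ≠ 0 := by
    rintro _ (⟨j, rfl⟩ | ⟨i, rfl⟩)
    · exact hF j
    · intro h0
      beta_reduce at h0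
      have := m.degree_X_pow_sub_X (R := K) i hq
      rw [h0, m.degree_zero, eq_comm, Finsupp.single_eq_zero] at this
      omega
  have hvanish : ∀ a : σ → K, (∀ j, eval a (F j) = 0) → ∀ b ∈ B, eval a b = 0 := by
    rintro a ha _ (⟨j, rfl⟩ | ⟨i, rfl⟩)
    · exact ha j
    · exact eval_X_pow_natCard_sub_X a i
  have := (finite_footprint q fun j => m.degree (F j)).to_subtype
  refine natCard_le_of_forall_exists_restrictSupport_eqOn {a | ∀ j, eval a (F j) = 0} _
    fun f => ?_
  obtain ⟨r, hfr, hr⟩ := m.exists_sub_mem_span_forall_not_degree_le hB f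
  refine ⟨r, fun c hc => ⟨fun i => ?_, fun j => hr c hc _ (.inl ⟨j, rfl⟩)⟩,
    fun a ha => ?_⟩
  · by_contra! hci
    refine hr c hc _ (.inr ⟨i, rfl⟩) ?_
    rw [m.degree_X_pow_sub_X i hq, Finsupp.single_le_iff]
    omega
  · have : Ideal.span B ≤ RingHom.ker (eval a) :=
      Ideal.span_le.2 fun b hb => RingHom.mem_ker.2 (hvanish a ha b hb)
    simpa [sub_eq_zero] using this hfr

end MvPolynomial

theorem card_commonZeros_le_card_footprint_general
    (q n r : ℕ) (hq : IsPrimePow q) (k : Type*) [Field k]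
    (Fq : Subfield k) (hcard : Nat.card Fq = q)
    (le : (Fin n →₀ ℕ) → (Fin n →₀ ℕ) → Prop)
    (hantisymm : ∀ μ ν, le μ ν → le ν μ → μ = ν)
    (htrans : ∀ μ ν ξ, le μ ν → le ν ξ → le μ ξ)
    (htotal : ∀ μ ν, le μ ν ∨ le ν μ)
    (hone : ∀ μ, le 0 μ)
    (hmul : ∀ ν μ₁ μ₂, le μ₁ μ₂ → le (ν + μ₁) (ν + μ₂))
    (lm : MvPolynomial (Fin n) Fq → (Fin n →₀ ℕ))
    (hlm : ∀ f : MvPolynomial (Fin n) Fq, f ≠ 0 →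
      lm f ∈ f.support ∧ ∀ ν ∈ f.support, le ν (lm f))
    (F : Fin r → MvPolynomial (Fin n) Fq)
    (hF : ∀ j, F j ≠ 0) :
    Nat.card {a : Fin n → Fq // ∀ j, MvPolynomial.eval a (F j) = 0} ≤
      Nat.card {μ : Fin n →₀ ℕ //
        (∀ i : Fin n, μ i ≤ q - 1) ∧ ∀ j : Fin r, ¬ lm (F j) ≤ μ} := by
  have : Finite Fq := Nat.finite_of_card_ne_zero (hcard ▸ hq.ne_zero)
  let m := IsMonomialOrder.toMonomialOrder ⟨hantisymm, htrans, htotal, hone, hmul⟩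
  have hdeg : ∀ j, m.degree (F j) = lm (F j) := fun j =>
    m.degree_eq_of_forall_le (hlm _ (hF j)).1 (hlm _ (hF j)).2
  have hbound := natCard_zeros_le_natCard_footprint m F hF
  simp only [hcard, hdeg] at hbound
  exact hbound

/-- Affine `F_q`-footprint bound: given a monomial order `le` on the monomials of
`k[X_1,…,X_n]` (identified with `Fin n →₀ ℕ`), a leading-monomial function `lm` for it,
and nonzero polynomials `f_1,…,f_r ∈ F_q[X_1,…,X_n]`, the number of common zeros of
`f_1,…,f_r` in `F_q^n` is at most the number of reduced monomials divisible by none of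
the leading monomials `lm f_1, …, lm f_r` (divisibility of monomials being the pointwise
order `≤` on exponent vectors). -/
theorem card_commonZeros_le_card_footprint
    (q n r : ℕ) (hq : IsPrimePow q) (k : Type*) [Field k]
    (Fq : Subfield k) (hcard : Nat.card Fq = q)
    (le : (Fin n →₀ ℕ) → (Fin n →₀ ℕ) → Prop)
    (hrefl : ∀ μ, le μ μ)
    (hantisymm : ∀ μ ν, le μ ν → le ν μ → μ = ν)
    (htrans : ∀ μ ν ξ, le μ ν → le ν ξ → le μ ξ)
    (htotal : ∀ μ ν, le μ ν ∨ le ν μ)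
    (hone : ∀ μ, le 0 μ)
    (hmul : ∀ ν μ₁ μ₂, le μ₁ μ₂ → le (ν + μ₁) (ν + μ₂))
    (lm : MvPolynomial (Fin n) Fq → (Fin n →₀ ℕ))
    (hlm : ∀ f : MvPolynomial (Fin n) Fq, f ≠ 0 →
      lm f ∈ f.support ∧ ∀ ν ∈ f.support, le ν (lm f))
    (F : Fin r → MvPolynomial (Fin n) Fq)
    (hF : ∀ j, F j ≠ 0) :
    Nat.card {a : Fin n → Fq // ∀ j, MvPolynomial.eval a (F j) = 0} ≤
      Nat.card {μ : Fin n →₀ ℕ //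
        (∀ i : Fin n, μ i ≤ q - 1) ∧ ∀ j : Fin r, ¬ lm (F j) ≤ μ} :=
  card_commonZeros_le_card_footprint_general q n r hq k Fq hcard le hantisymm htrans htotal hone
    hmul lm hlm F hF
end

section
/- Let q be a prime power, let k be a field containing the finite field F_q, and let d be a nonnegative integer. Then 𝔯_d ∩ Γ*_q(k)_d = {0}, where 𝔯_d denotes the k-vector space spanned by the projectively reduced monomials of degree d in k[X_0, …, X_n], and Γ*_q(k)_d denotes the space of homogeneous polynomials of degree d lying in the ideal Γ*_q(k). -/
/-!
Every element of `Γ*_q` vanishes at the `𝔽_q`-rational points, so it suffices to show that a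
homogeneous `f` spanned by projectively reduced monomials and vanishing on `𝔽_q^{n+1}` is zero.
We kill the coefficients of monomials in `X_0, …, X_ℓ` by induction on `ℓ`. Once those in
`X_0, …, X_{ℓ-1}` are known to vanish, evaluating `f` at the points `(x_0, …, x_{ℓ-1}, 1, 0, …, 0)`
gives a polynomial in `X_0, …, X_{ℓ-1}` whose coefficients are those of the monomials of `f`
with leading index `ℓ` (homogeneity makes setting `X_ℓ = 1` injective on them). Reducedness
bounds its degree in each variable by `q - 1` and it vanishes on `𝔽_q^ℓ`, so it is zero by the
combinatorial Nullstellensatz.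
-/

open MvPolynomial

theorem Subfield.pow_natCard_of_mem {k : Type*} [Field k] {Fq : Subfield k} [Finite Fq]
    {c : k} (hc : c ∈ Fq) : c ^ Nat.card Fq = c := by
  have := Fintype.ofFinite Fq
  simpa [Nat.card_eq_fintype_card] using congrArg Subtype.val (FiniteField.pow_card (⟨c, hc⟩ : Fq))

theorem Finsupp.eq_of_degree_eq_of_erase_eq {σ : Type*} {μ ν : σ →₀ ℕ} (a : σ)
    (hdeg : μ.degree = ν.degree) (herase : μ.erase a = ν.erase a) : μ = ν := by
  have hsplit (κ : σ →₀ ℕ) : κ.degree = κ a + (κ.erase a).degree := by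
    conv_lhs => rw [← Finsupp.single_add_erase a κ]
    rw [map_add, Finsupp.degree_single]
  have ha : μ a = ν a := by rw [hsplit μ, hsplit ν, herase] at hdeg; omega
  rw [← Finsupp.single_add_erase a μ, ← Finsupp.single_add_erase a ν, ha, herase]

namespace MvPolynomial

variable {σ k : Type*} [Field k]

theorem eq_zero_of_degreeOf_lt_of_eval_eq_zero [Finite σ] (Fq : Subfield k) [Finite Fq]
    (g : MvPolynomial σ k) (hdeg : ∀ i, g.degreeOf i < Nat.card Fq)
    (heval : ∀ x : σ → k, (∀ i, x i ∈ Fq) → eval x g = 0) : g = 0 := by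
  have hfin : (Fq : Set k).Finite := Set.toFinite _
  refine eq_zero_of_eval_zero_at_prod_finset g (fun _ => hfin.toFinset) ?_ ?_
  · intro i
    rw [← Nat.card_eq_card_finite_toFinset]
    exact hdeg i
  · intro x hx
    exact heval x fun i => hfin.mem_toFinset.mp (hx i)

section Fermat

variable [LT σ]

variable (σ k) in
noncomputable def fermatIdeal (q : ℕ) : Ideal (MvPolynomial σ k) :=
  Ideal.span {p | ∃ i j : σ, i < j ∧ p = X i ^ q * X j - X i * X j ^ q}

theorem fermatIdeal_le_ker_eval {q : ℕ} {x : σ → k} (hx : ∀ i, x i ^ q = x i) :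
    fermatIdeal σ k q ≤ RingHom.ker (eval x) := by
  rw [fermatIdeal, Ideal.span_le]
  rintro p ⟨i, j, -, rfl⟩
  simp [hx]

def IsProjectivelyReduced (q : ℕ) (μ : σ →₀ ℕ) : Prop :=
  ∀ i j, i < j → μ j ≠ 0 → μ i ≤ q - 1

end Fermat

section Stratum

variable [LinearOrder σ]

def stratumPoint (ℓ : σ) (x : σ → k) : σ → k :=
  fun i => if i < ℓ then x i else if i = ℓ then 1 else 0

open Classical in
noncomputable def restrictToStratum (ℓ : σ) (f : MvPolynomial σ k) : MvPolynomial σ k :=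
  ∑ μ ∈ f.support with ∀ j, ℓ < j → μ j = 0, monomial (μ.erase ℓ) (coeff μ f)

theorem eval_restrictToStratum [Fintype σ] (ℓ : σ) (f : MvPolynomial σ k) (x : σ → k) :
    eval x (restrictToStratum ℓ f) = eval (stratumPoint ℓ x) f := by
  classical
  rw [restrictToStratum, map_sum, eval_eq', Finset.sum_filter]
  refine Finset.sum_congr rfl fun μ _ => ?_
  split_ifs with hμ
  · rw [eval_monomial, Finsupp.prod_fintype _ _ fun _ => pow_zero _]
    congr 1
    refine Finset.prod_congr rfl fun i _ => ?_
    rcases lt_trichotomy i ℓ with hi | rfl | hi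
    · simp [stratumPoint, hi, Finsupp.erase_ne hi.ne]
    · simp [stratumPoint]
    · simp [stratumPoint, hμ i hi, Finsupp.erase_ne hi.ne']
  · push Not at hμ
    obtain ⟨j, hj, hμj⟩ := hμ
    refine (mul_eq_zero_of_right _ (Finset.prod_eq_zero (Finset.mem_univ j) ?_)).symm
    simp [stratumPoint, hj.not_gt, hj.ne', hμj]

theorem coeff_restrictToStratum {ℓ : σ} {f : MvPolynomial σ k} {d : ℕ} (hf : f.IsHomogeneous d)
    {μ : σ →₀ ℕ} (hμ : μ ∈ f.support) (hμℓ : ∀ j, ℓ < j → μ j = 0) :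
    coeff (μ.erase ℓ) (restrictToStratum ℓ f) = coeff μ f := by
  classical
  have hdeg {ν : σ →₀ ℕ} (hν : ν ∈ f.support) : ν.degree = d :=
    not_not.mp fun h => mem_support_iff.mp hν (hf.coeff_eq_zero h)
  rw [restrictToStratum, coeff_sum,
    Finset.sum_eq_single_of_mem μ (Finset.mem_filter.mpr ⟨hμ, hμℓ⟩), coeff_monomial, if_pos rfl]
  intro ν hν hne
  rw [coeff_monomial, if_neg]
  exact fun h => hne <| Finsupp.eq_of_degree_eq_of_erase_eq ℓ
    ((hdeg (Finset.mem_filter.mp hν).1).trans (hdeg hμ).symm) h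

theorem degreeOf_restrictToStratum_le {q : ℕ} {ℓ : σ} {f : MvPolynomial σ k}
    (hred : ∀ μ ∈ f.support, IsProjectivelyReduced q μ)
    (hbelow : ∀ μ, (∀ j, ℓ ≤ j → μ j = 0) → coeff μ f = 0) (i : σ) :
    degreeOf i (restrictToStratum ℓ f) ≤ q - 1 := by
  classical
  refine degreeOf_le_iff.mpr fun ν hν => ?_
  obtain ⟨μ, hμ, hνμ⟩ := Finset.mem_biUnion.mp (support_sum hν)
  obtain ⟨hμf, hμℓ⟩ := Finset.mem_filter.mp hμ
  rw [Finset.mem_singleton.mp (support_monomial_subset hνμ)]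
  have hμℓ' : μ ℓ ≠ 0 := fun h => mem_support_iff.mp hμf <|
    hbelow μ fun j hj => (eq_or_lt_of_le hj).elim (· ▸ h) (hμℓ j)
  rcases lt_trichotomy i ℓ with hi | rfl | hi
  · rw [Finsupp.erase_ne hi.ne]
    exact hred μ hμf i ℓ hi hμℓ'
  · simp
  · simp [Finsupp.erase_ne hi.ne', hμℓ i hi]

theorem coeff_eq_zero_of_eq_zero_above [Fintype σ] {Fq : Subfield k} [Finite Fq]
    {f : MvPolynomial σ k} {d : ℕ} (hf : f.IsHomogeneous d)
    (hred : ∀ μ ∈ f.support, IsProjectivelyReduced (Nat.card Fq) μ)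
    (hvan : ∀ x : σ → k, (∀ i, x i ∈ Fq) → eval x f = 0) (ℓ : σ)
    (hbelow : ∀ μ, (∀ j, ℓ ≤ j → μ j = 0) → coeff μ f = 0)
    (μ : σ →₀ ℕ) (hμ : ∀ j, ℓ < j → μ j = 0) : coeff μ f = 0 := by
  have hslice : restrictToStratum ℓ f = 0 := by
    refine eq_zero_of_degreeOf_lt_of_eval_eq_zero Fq _ (fun i => ?_) (fun x hx => ?_)
    · have := degreeOf_restrictToStratum_le hred hbelow i
      have := Nat.card_pos (α := Fq)
      omega
    · rw [eval_restrictToStratum]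
      refine hvan _ fun i => ?_
      unfold stratumPoint
      split_ifs
      exacts [hx i, Fq.one_mem, Fq.zero_mem]
  by_cases hμf : μ ∈ f.support
  · rw [← coeff_restrictToStratum hf hμf hμ, hslice, coeff_zero]
  · exact notMem_support_iff.mp hμf

end Stratum

theorem eq_zero_of_isProjectivelyReduced_of_eval_eq_zero {m : ℕ} {Fq : Subfield k} [Finite Fq]
    {f : MvPolynomial (Fin m) k} {d : ℕ} (hf : f.IsHomogeneous d)
    (hred : ∀ μ ∈ f.support, IsProjectivelyReduced (Nat.card Fq) μ)
    (hvan : ∀ x : Fin m → k, (∀ i, x i ∈ Fq) → eval x f = 0) : f = 0 := by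
  have key (ℓ : ℕ) (μ : Fin m →₀ ℕ) (hμ : ∀ j : Fin m, ℓ ≤ j → μ j = 0) : coeff μ f = 0 := by
    induction ℓ generalizing μ with
    | zero =>
      obtain rfl : μ = 0 := Finsupp.ext fun j => hμ j j.val.zero_le
      simpa [constantCoeff_eq] using hvan 0 fun _ => Fq.zero_mem
    | succ ℓ ih =>
      by_cases hℓ : ℓ < m
      · exact coeff_eq_zero_of_eq_zero_above hf hred hvan ⟨ℓ, hℓ⟩ ih μ hμ
      · exact ih μ fun j hj => absurd j.isLt (by omega)
  ext μ
  exact key m μ fun j hj => absurd j.isLt (by omega)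

end MvPolynomial

/-- `𝔯_d ∩ Γ*_q(k)_d = {0}`: if `f ∈ k[X_0,…,X_n]` is homogeneous of degree `d`, is a
`k`-linear combination of projectively reduced monomials (every monomial `μ` in its
support satisfies `deg_{X_i} μ ≤ q - 1` whenever some variable `X_j` with `j > i`
occurs in `μ`), and `f` lies in the ideal `Γ*_q(k)` generated by the Fermat polynomials
`X_i^q X_j - X_i X_j^q` for `i < j`, then `f = 0`. -/
theorem projectivelyReduced_inter_fermatIdeal_eq_zero
    (q n d : ℕ) (hq : IsPrimePow q) (k : Type*) [Field k]
    (Fq : Subfield k) (hcard : Nat.card Fq = q)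
    (f : MvPolynomial (Fin (n + 1)) k)
    (hhom : f.IsHomogeneous d)
    (hred : ∀ μ ∈ f.support, ∀ i j : Fin (n + 1), i < j → μ j ≠ 0 → μ i ≤ q - 1)
    (hmem : f ∈ Ideal.span {p : MvPolynomial (Fin (n + 1)) k |
      ∃ i j : Fin (n + 1), i < j ∧ p = X i ^ q * X j - X i * X j ^ q}) :
    f = 0 := by
  have : Finite Fq := Nat.finite_of_card_ne_zero (hcard ▸ hq.pos.ne')
  subst hcard
  refine eq_zero_of_isProjectivelyReduced_of_eval_eq_zero hhom hred fun x hx => ?_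
  exact fermatIdeal_le_ker_eval (fun i => Subfield.pow_natCard_of_mem (hx i)) hmem
end

section
/- Let q be a prime power, let k be a field containing the finite field F_q, and let f(X_0, X_1) = X_0^q X_1 − X_0 X_1^q + X_0^{q+1} ∈ k[X_0, X_1]. Then the principal ideal ⟨f⟩ of k[X_0, X_1] is a radical ideal. -/
/-!
Write `f = X₀ · g` with `g = X₀^(q-1) X₁ - X₁^q + X₀^q`, and view `g` as a polynomial in `X₁` over
`k[X₀]`. Since `q = 0` in `k`, its `X₁`-derivative is the constant `X₀^(q-1)`. A square factor of `g`
divides this derivative, so it is constant in `X₁`; as `g` is monic in `X₁` up to sign, the factor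
is a unit. Finally the prime `X₀` does not divide `g`, so `f` is squarefree, hence `⟨f⟩` is radical.
-/

theorem SubringClass.natCast_card_eq_zero {R S : Type*} [Ring R] [SetLike S R]
    [SubringClass S R] (s : S) : (Nat.card s : R) = 0 := by
  cases finite_or_infinite s
  · have := Fintype.ofFinite s
    rw [Nat.card_eq_fintype_card, ← map_natCast (SubringClass.subtype s), Nat.cast_card_eq_zero,
      map_zero]
  · simp

theorem squarefree_of_squarefree_map {M N F : Type*} [Monoid M] [Monoid N] [EquivLike F M N]
    [MulEquivClass F M N] (e : F) {x : M} (h : Squarefree (e x)) : Squarefree x := fun d hd =>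
  (isUnit_map_iff e d).1 (h (e d) (map_mul e d d ▸ map_dvd e hd))

namespace Polynomial

variable {R : Type*} [CommRing R] [IsDomain R]

theorem squarefree_of_isPrimitive_of_derivative_eq_C {g : R[X]} {a : R} (hg : g.IsPrimitive)
    (ha : a ≠ 0) (hder : derivative g = C a) : Squarefree g := by
  intro d hdd
  have hd : d ∣ C a := hder ▸ by
    simpa using pow_sub_one_dvd_derivative_of_pow_dvd (n := 2) (sq d ▸ hdd)
  have hdeg : d.natDegree = 0 := by
    simpa using natDegree_le_of_dvd hd (C_ne_zero.2 ha)
  rw [eq_C_of_natDegree_eq_zero hdeg] at hdd ⊢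
  exact isUnit_C.2 (hg _ ((dvd_mul_right _ _).trans hdd))

theorem squarefree_C_mul_of_isPrimitive [UniqueFactorizationMonoid R] {x : R} {g : R[X]}
    (hx : Prime x) (hg : g.IsPrimitive) (hsq : Squarefree g) : Squarefree (C x * g) := by
  have hCx : Prime (C x) := prime_C_iff.2 hx
  refine squarefree_mul_iff.2 ⟨hCx.irreducible.isRelPrime_iff_not_dvd.2 fun h => ?_,
    hCx.squarefree, hsq⟩
  exact hx.not_isUnit (hg x h)

end Polynomial

namespace PrincipalIdealExample

open Polynomial

variable {R : Type*} [CommRing R]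

/-- With `x = X₀` and `X = X₁`, the polynomial `f` of the theorem is `X₀ * cofactor X₀ (q - 2)`. -/
noncomputable def cofactor (x : R) (n : ℕ) : R[X] :=
  C (x ^ (n + 1)) * X - X ^ (n + 2) + C (x ^ (n + 2))

theorem derivative_cofactor (x : R) {n : ℕ} (hn : ((n + 2 : ℕ) : R) = 0) :
    derivative (cofactor x n) = C (x ^ (n + 1)) := by
  rw [cofactor, derivative_add, derivative_sub, derivative_C_mul_X, derivative_X_pow, hn,
    derivative_C]
  simp

theorem isPrimitive_cofactor [Nontrivial R] (x : R) (n : ℕ) : (cofactor x n).IsPrimitive := by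
  have hmonic : (-cofactor x n).Monic := by
    rw [cofactor]
    monicity!
    simp only [← C_pow, coeff_C]
    simp
  exact isPrimitive_of_dvd hmonic.isPrimitive (dvd_neg.2 dvd_rfl)

theorem squarefree_C_mul_cofactor [IsDomain R] [UniqueFactorizationMonoid R] {x : R} {n : ℕ}
    (hx : Prime x) (hn : ((n + 2 : ℕ) : R) = 0) : Squarefree (C x * cofactor x n) :=
  squarefree_C_mul_of_isPrimitive hx (isPrimitive_cofactor x n) <|
    squarefree_of_isPrimitive_of_derivative_eq_C (isPrimitive_cofactor x n)
      (pow_ne_zero _ hx.ne_zero) (derivative_cofactor x hn)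

end PrincipalIdealExample

namespace MvPolynomial

variable (k : Type*) [CommRing k]

noncomputable def finTwoEquivPolynomial :
    MvPolynomial (Fin 2) k ≃ₐ[k] Polynomial (MvPolynomial (Fin 1) k) :=
  (renameEquiv k (Equiv.swap 0 1)).trans (finSuccEquiv k 1)

@[simp]
theorem finTwoEquivPolynomial_X_zero : finTwoEquivPolynomial k (X 0) = Polynomial.C (X 0) := by
  simp only [finTwoEquivPolynomial, AlgEquiv.trans_apply, renameEquiv_apply, rename_X,
    Equiv.swap_apply_left]
  exact finSuccEquiv_X_succ (j := 0)

@[simp]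
theorem finTwoEquivPolynomial_X_one : finTwoEquivPolynomial k (X 1) = Polynomial.X := by
  simp [finTwoEquivPolynomial, finSuccEquiv_X_zero]

theorem finTwoEquivPolynomial_apply_eq_C_mul_cofactor (n : ℕ) :
    finTwoEquivPolynomial k
      (X 0 ^ (n + 2) * X 1 - X 0 * X 1 ^ (n + 2) + X 0 ^ (n + 2 + 1) : MvPolynomial (Fin 2) k) =
      Polynomial.C (X 0) * PrincipalIdealExample.cofactor (X 0 : MvPolynomial (Fin 1) k) n := by
  simp only [map_add, map_sub, map_mul, map_pow, finTwoEquivPolynomial_X_zero,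
    finTwoEquivPolynomial_X_one, PrincipalIdealExample.cofactor]
  ring

end MvPolynomial

open MvPolynomial

/-- For `f(X_0, X_1) = X_0^q X_1 - X_0 X_1^q + X_0^{q+1} ∈ k[X_0, X_1]`, the principal
ideal `⟨f⟩` is a radical ideal. -/
theorem principal_ideal_example_isRadical
    (q : ℕ) (hq : IsPrimePow q) (k : Type*) [Field k]
    (Fq : Subfield k) (hcard : Nat.card Fq = q) :
    (Ideal.span {(X 0 ^ q * X 1 - X 0 * X 1 ^ q + X 0 ^ (q + 1) :
      MvPolynomial (Fin 2) k)}).IsRadical := by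
  obtain ⟨n, rfl⟩ : ∃ n, q = n + 2 := ⟨q - 2, by have := hq.two_le; omega⟩
  have hchar : ((n + 2 : ℕ) : MvPolynomial (Fin 1) k) = 0 := by
    rw [← map_natCast C, ← hcard, SubringClass.natCast_card_eq_zero, map_zero]
  rw [← isRadical_iff_span_singleton]
  refine Squarefree.isRadical (squarefree_of_squarefree_map (finTwoEquivPolynomial k) ?_)
  rw [finTwoEquivPolynomial_apply_eq_C_mul_cofactor]
  exact PrincipalIdealExample.squarefree_C_mul_cofactor X_prime hchar
end

section
/- Let q be a prime power, let k be a field containing the finite field F_q, and let f(X_0, X_1) = X_0^q X_1 − X_0 X_1^q + X_0^{q+1} ∈ k[X_0, X_1]. Then the ideal ⟨f⟩ + Γ*_q(k) = ⟨f, X_0^q X_1 − X_0 X_1^q⟩ of k[X_0, X_1] is not a radical ideal: it contains X_0^{q+1} but does not contain X_0. -/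
/-!
`X₀ ^ (q + 1)` is the difference of the two generators. To see that `X₀` is not in the ideal,
evaluate at the point `(ε, 0)` over the dual numbers `k[ε]`: both generators vanish there
(using `ε ^ 2 = 0` and `q ≠ 0`), while `X₀` evaluates to `ε ≠ 0`.
-/

open MvPolynomial DualNumber TrivSqZeroExt

namespace DualNumber

variable {R : Type*}

theorem eps_ne_zero [Semiring R] [Nontrivial R] : (ε : R[ε]) ≠ 0 := fun h =>
  one_ne_zero (by simpa only [snd_eps, snd_zero] using congrArg snd h)

theorem eps_pow_eq_zero [Semiring R] {n : ℕ} (hn : 2 ≤ n) : (ε : R[ε]) ^ n = 0 :=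
  pow_eq_zero_of_le hn eps_pow_two

end DualNumber

section FermatPair

variable {k : Type*} [CommRing k]

/-- The generator of `Γ*_q(k)` for `n = 1`. -/
noncomputable def fermatPoly (q : ℕ) : MvPolynomial (Fin 2) k :=
  X 0 ^ q * X 1 - X 0 * X 1 ^ q

theorem mem_span_pair_add_left {R : Type*} [CommRing R] (a b : R) :
    b ∈ Ideal.span {a + b, a} :=
  Ideal.mem_span_pair.mpr ⟨1, -1, by ring⟩

theorem aeval_eps_zero_fermatPoly {q : ℕ} (hq : q ≠ 0) :
    aeval ![(ε : k[ε]), 0] (fermatPoly (k := k) q) = 0 := by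
  simp [fermatPoly, zero_pow hq]

theorem span_fermatPoly_le_ker_aeval_eps_zero {q : ℕ} (hq : q ≠ 0) :
    Ideal.span {fermatPoly q + X 0 ^ (q + 1), (fermatPoly q : MvPolynomial (Fin 2) k)} ≤
      RingHom.ker (aeval (R := k) ![(ε : k[ε]), 0]) := by
  have hpow : aeval (R := k) ![(ε : k[ε]), 0] (X 0 ^ (q + 1)) = 0 := by
    simpa using eps_pow_eq_zero (R := k) (by omega : 2 ≤ q + 1)
  rw [Ideal.span_le, Set.insert_subset_iff, Set.singleton_subset_iff]
  exact ⟨by simp [map_add, aeval_eps_zero_fermatPoly hq, hpow],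
    aeval_eps_zero_fermatPoly hq⟩

theorem X_zero_not_mem_span_fermatPoly [Nontrivial k] {q : ℕ} (hq : q ≠ 0) :
    (X 0 : MvPolynomial (Fin 2) k) ∉
      Ideal.span {fermatPoly q + X 0 ^ (q + 1), fermatPoly q} := fun h =>
  eps_ne_zero (by simpa using span_fermatPoly_le_ker_aeval_eps_zero hq h)

end FermatPair

theorem ideal_add_fermat_not_radical_general
    (q : ℕ) (hq : IsPrimePow q) (k : Type*) [Field k] :
    (X 0 ^ (q + 1) : MvPolynomial (Fin 2) k) ∈
      Ideal.span {(X 0 ^ q * X 1 - X 0 * X 1 ^ q + X 0 ^ (q + 1) :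
          MvPolynomial (Fin 2) k),
        X 0 ^ q * X 1 - X 0 * X 1 ^ q} ∧
    (X 0 : MvPolynomial (Fin 2) k) ∉
      Ideal.span {(X 0 ^ q * X 1 - X 0 * X 1 ^ q + X 0 ^ (q + 1) :
          MvPolynomial (Fin 2) k),
        X 0 ^ q * X 1 - X 0 * X 1 ^ q} ∧
    ¬ (Ideal.span {(X 0 ^ q * X 1 - X 0 * X 1 ^ q + X 0 ^ (q + 1) :
          MvPolynomial (Fin 2) k),
        X 0 ^ q * X 1 - X 0 * X 1 ^ q}).IsRadical := by
  have hmem := mem_span_pair_add_left (fermatPoly q : MvPolynomial (Fin 2) k) (X 0 ^ (q + 1))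
  have hnot := X_zero_not_mem_span_fermatPoly (k := k) hq.pos.ne'
  exact ⟨hmem, hnot, fun hrad => hnot (hrad ⟨q + 1, hmem⟩)⟩

/-- For `f(X_0, X_1) = X_0^q X_1 - X_0 X_1^q + X_0^{q+1} ∈ k[X_0, X_1]`, the ideal
`⟨f⟩ + Γ*_q(k) = ⟨f, X_0^q X_1 - X_0 X_1^q⟩` contains `X_0^{q+1}` but not `X_0`,
and hence is not a radical ideal. -/
theorem ideal_add_fermat_not_radical
    (q : ℕ) (hq : IsPrimePow q) (k : Type*) [Field k]
    (Fq : Subfield k) (hcard : Nat.card Fq = q) :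
    (X 0 ^ (q + 1) : MvPolynomial (Fin 2) k) ∈
      Ideal.span {(X 0 ^ q * X 1 - X 0 * X 1 ^ q + X 0 ^ (q + 1) :
          MvPolynomial (Fin 2) k),
        X 0 ^ q * X 1 - X 0 * X 1 ^ q} ∧
    (X 0 : MvPolynomial (Fin 2) k) ∉
      Ideal.span {(X 0 ^ q * X 1 - X 0 * X 1 ^ q + X 0 ^ (q + 1) :
          MvPolynomial (Fin 2) k),
        X 0 ^ q * X 1 - X 0 * X 1 ^ q} ∧
    ¬ (Ideal.span {(X 0 ^ q * X 1 - X 0 * X 1 ^ q + X 0 ^ (q + 1) :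
          MvPolynomial (Fin 2) k),
        X 0 ^ q * X 1 - X 0 * X 1 ^ q}).IsRadical :=
  ideal_add_fermat_not_radical_general q hq k
end
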